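/- Let X be a Banach space with two closed linear subspaces M and N such that N is a right semi-compact perturbation of M (M ∼^{sc} N), and let m be a positive integer. Then there exist a compact linear operator K₁ ∈ B(X) with (I+K₁)^{-1} ∈ B(X), and finite-dimensional linear subspaces V of (I+K₁)M and U of N with U ∩ (I+K₁)M = {0} and V ∩ N = {0}, such that (I+K₁)M ⊕ U = N ⊕ V if [M−N] ∈ ℤ, while (I+K₁)M ⊕ U ⊆ N ⊕ V with dim U = dim V + m if [M−N] = −∞. -/

import Mathlib

open scoped Classical

/-!
Let `K` be a compact witness of `M ∼^{sc} N` and `T = I + K`. Let `π` be a bounded projection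
onto the finite-dimensional `ker T` and let `J : ker T → X` map into a complement of `range T`,
injectively if that complement is large enough and onto it otherwise. Then `I + K₁` with
`K₁ = K + J π` is injective or surjective. By the Fredholm alternative an injective compact
perturbation of the identity is bijective; so is a surjective one, because a bounded right inverse
of it is an injective compact perturbation of the identity whose surjectivity forces `ker T = 0`.

Since `(I+K₁)M` and `(I+K)M ≤ N` differ only by the finite-dimensional `range (J π)`, the rest is
linear algebra: `V` complements `N ∩ (I+K₁)M` in `(I+K₁)M`, and `U` complements
`(I+K₁)M ∩ N` in `N` when `N / (I+K)M` is finite-dimensional (this is exactly `[M−N] ≠ −∞`);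
otherwise `U` is any subspace of `N` of dimension `dim V + m` transverse to `(I+K₁)M`.
-/

/-- `μ` is a right semi-compact perturbation of `λ` (written `λ ∼^{sc} μ`):
there is a compact operator `K ∈ B(X)` with `(I + K)λ ⊆ μ`. -/
def SCPerturb {X : Type*} [NormedAddCommGroup X] [NormedSpace ℂ X]
    (lam mu : Submodule ℂ X) : Prop :=
  ∃ K : X →L[ℂ] X, IsCompactOperator ⇑K ∧
    Submodule.map ((1 + K : X →L[ℂ] X) : X →ₗ[ℂ] X) lam ≤ mu

/-- Dimension of a module valued in `ℤ ∪ {±∞}`: the finrank if finite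
dimensional, `+∞` otherwise. -/
noncomputable def edimE (V : Type*) [AddCommGroup V] [Module ℂ V] : EReal :=
  if FiniteDimensional ℂ V then ((Module.finrank ℂ V : ℝ) : EReal) else ⊤

/-- The index of `I + K : λ → μ`, i.e.
`dim ker((I+K)|_λ) − dim(μ/(I+K)λ)`, valued in `ℤ ∪ {−∞}` (it equals `−∞`
when `dim(μ/(I+K)λ)` is infinite). -/
noncomputable def relIndexWith {X : Type*} [NormedAddCommGroup X] [NormedSpace ℂ X]
    (lam mu : Submodule ℂ X) (K : X →L[ℂ] X) : EReal :=
  edimE ↥(lam ⊓ LinearMap.ker ((1 + K : X →L[ℂ] X) : X →ₗ[ℂ] X)) -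
    edimE (↥mu ⧸ (Submodule.map ((1 + K : X →L[ℂ] X) : X →ₗ[ℂ] X) lam).comap mu.subtype)

/-- The relative dimension `[λ − μ]`, defined via any compact witness of
`λ ∼^{sc} μ`, or as `−[μ − λ]` (in particular `+∞` when `[μ−λ] = −∞`) if only
`μ ∼^{sc} λ` holds. -/
noncomputable def relDim {X : Type*} [NormedAddCommGroup X] [NormedSpace ℂ X]
    (lam mu : Submodule ℂ X) : EReal :=
  if h : SCPerturb lam mu then relIndexWith lam mu h.choose
  else if h' : SCPerturb mu lam then -relIndexWith mu lam h'.choose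
  else 0

/-- `μ` is a compact perturbation of `λ` (written `λ ∼^{c} μ`): there is a
compact operator `K` with `(I+K)λ ⊆ μ` and `I + K : λ → μ` Fredholm. -/
def CPerturb {X : Type*} [NormedAddCommGroup X] [NormedSpace ℂ X]
    (lam mu : Submodule ℂ X) : Prop :=
  ∃ K : X →L[ℂ] X, IsCompactOperator ⇑K ∧
    Submodule.map ((1 + K : X →L[ℂ] X) : X →ₗ[ℂ] X) lam ≤ mu ∧
    FiniteDimensional ℂ ↥(lam ⊓ LinearMap.ker ((1 + K : X →L[ℂ] X) : X →ₗ[ℂ] X)) ∧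
    FiniteDimensional ℂ
      (↥mu ⧸ (Submodule.map ((1 + K : X →L[ℂ] X) : X →ₗ[ℂ] X) lam).comap mu.subtype)

universe u v

namespace Submodule

theorem map_le_map_sup_range_sub {R M M₂ : Type*} [Ring R] [AddCommGroup M] [Module R M]
    [AddCommGroup M₂] [Module R M₂] (f g : M →ₗ[R] M₂) (p : Submodule R M) :
    p.map f ≤ p.map g ⊔ LinearMap.range (f - g) := by
  rintro _ ⟨x, hx, rfl⟩
  exact mem_sup.mpr ⟨g x, mem_map_of_mem hx, (f - g) x, LinearMap.mem_range_self _ x, by simp⟩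

variable {𝕜 : Type*} {X : Type u} [DivisionRing 𝕜] [AddCommGroup X] [Module 𝕜 X]

theorem exists_linearMap_disjoint_range_and_injective_or_codisjoint (R : Submodule 𝕜 X)
    (W : Type v) [AddCommGroup W] [Module 𝕜 W] :
    ∃ J : W →ₗ[𝕜] X, Disjoint R (LinearMap.range J) ∧
      (Function.Injective J ∨ Codisjoint R (LinearMap.range J)) := by
  obtain ⟨C, hC⟩ := R.exists_isCompl
  have hrange (J : W →ₗ[𝕜] C) : LinearMap.range (C.subtype ∘ₗ J) ≤ C :=
    (LinearMap.range_comp_le_range _ _).trans C.range_subtype.le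
  rcases le_total (Cardinal.lift.{u} (Module.rank 𝕜 W)) (Cardinal.lift.{v} (Module.rank 𝕜 C))
    with hWC | hCW
  · obtain ⟨f, hf⟩ := lift_rank_le_iff_exists_linearMap.mp hWC
    exact ⟨C.subtype ∘ₗ f, hC.disjoint.mono_right (hrange f),
      Or.inl (Subtype.val_injective.comp hf)⟩
  · obtain ⟨g, hg⟩ := lift_rank_le_iff_exists_linearMap.mp hCW
    obtain ⟨h, hhg⟩ := g.exists_leftInverse_of_injective (LinearMap.ker_eq_bot.mpr hg)
    have hh : LinearMap.range h = ⊤ :=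
      LinearMap.range_eq_top.mpr fun c => ⟨g c, LinearMap.congr_fun hhg c⟩
    have hJ : LinearMap.range (C.subtype ∘ₗ h) = C := by
      rw [LinearMap.range_comp, hh, Submodule.map_top, C.range_subtype]
    exact ⟨C.subtype ∘ₗ h, hJ.symm ▸ hC.disjoint, Or.inr (hJ.symm ▸ hC.codisjoint)⟩

theorem exists_le_disjoint_le_sup_linearEquiv_quotient (D B : Submodule 𝕜 X) :
    ∃ C ≤ B, Disjoint C D ∧ B ≤ D ⊔ C ∧ Nonempty (C ≃ₗ[𝕜] B ⧸ D.comap B.subtype) := by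
  obtain ⟨C', hC'⟩ := (D.comap B.subtype).exists_isCompl
  refine ⟨C'.map B.subtype, map_subtype_le _ _, ?_, ?_,
    ⟨(C'.equivMapOfInjective _ B.injective_subtype).symm ≪≫ₗ
      (quotientEquivOfIsCompl _ _ hC').symm⟩⟩
  · rw [disjoint_def]
    rintro _ ⟨c, hc, rfl⟩ hcD
    have : c = 0 := (disjoint_def.mp hC'.disjoint) c hcD hc
    simp [this]
  · calc B = (D.comap B.subtype ⊔ C').map B.subtype := by
          rw [hC'.sup_eq_top, map_subtype_top]
      _ = B ⊓ D ⊔ C'.map B.subtype := by rw [map_sup, map_comap_subtype]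
      _ ≤ D ⊔ C'.map B.subtype := sup_le_sup_right inf_le_right _

theorem finiteDimensional_quotient_comap_subtype_iff {D B : Submodule 𝕜 X} :
    FiniteDimensional 𝕜 (B ⧸ D.comap B.subtype) ↔
      ∃ G : Submodule 𝕜 X, FiniteDimensional 𝕜 G ∧ B ≤ D ⊔ G := by
  constructor
  · intro hQ
    obtain ⟨C, -, -, hBC, ⟨e⟩⟩ := exists_le_disjoint_le_sup_linearEquiv_quotient D B
    exact ⟨C, Module.Finite.equiv e.symm, hBC⟩
  · rintro ⟨G, hG, hBG⟩
    set f := D.mkQ ∘ₗ B.subtype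
    have hker : LinearMap.ker f = D.comap B.subtype := by
      rw [LinearMap.ker_comp, ker_mkQ]
    have hrange : LinearMap.range f ≤ G.map D.mkQ := by
      calc LinearMap.range f = B.map D.mkQ := by rw [LinearMap.range_comp, range_subtype]
        _ ≤ (D ⊔ G).map D.mkQ := map_mono hBG
        _ = G.map D.mkQ := by rw [map_sup, mkQ_map_self, bot_sup_eq]
    have := finiteDimensional_of_le hrange
    exact Module.Finite.equiv ((quotEquivOfEq _ _ hker.symm).trans f.quotKerEquivRange).symm

theorem exists_finiteDimensional_le_disjoint_le_sup {D B G : Submodule 𝕜 X}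
    [FiniteDimensional 𝕜 G] (hBG : B ≤ D ⊔ G) :
    ∃ C ≤ B, FiniteDimensional 𝕜 C ∧ Disjoint C D ∧ B ≤ D ⊔ C := by
  obtain ⟨C, hCB, hCD, hBC, ⟨e⟩⟩ := exists_le_disjoint_le_sup_linearEquiv_quotient D B
  have := finiteDimensional_quotient_comap_subtype_iff.mpr ⟨G, inferInstance, hBG⟩
  exact ⟨C, hCB, Module.Finite.equiv e.symm, hCD, hBC⟩

theorem exists_le_disjoint_finrank_eq {D B : Submodule 𝕜 X}
    (hQ : ¬ FiniteDimensional 𝕜 (B ⧸ D.comap B.subtype)) (k : ℕ) :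
    ∃ U ≤ B, FiniteDimensional 𝕜 U ∧ Disjoint U D ∧ Module.finrank 𝕜 U = k := by
  obtain ⟨C, hCB, hCD, -, ⟨e⟩⟩ := exists_le_disjoint_le_sup_linearEquiv_quotient D B
  have hC : Cardinal.aleph0 ≤ Module.rank 𝕜 C := by
    rw [← not_lt, Module.rank_lt_aleph0_iff]
    exact fun h => hQ (Module.Finite.equiv e)
  obtain ⟨f, hf⟩ : ∃ f : (Fin k → 𝕜) →ₗ[𝕜] C, Function.Injective f := by
    refine lift_rank_le_iff_exists_linearMap.mp ?_
    simpa using (Cardinal.natCast_lt_aleph0 (n := k)).le.trans hC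
  have hU : LinearMap.range (C.subtype ∘ₗ f) ≤ C :=
    (LinearMap.range_comp_le_range _ _).trans C.range_subtype.le
  refine ⟨_, hU.trans hCB, inferInstance, hCD.mono_left hU, ?_⟩
  rw [LinearMap.finrank_range_of_inj (Subtype.val_injective.comp hf), Module.finrank_fin_fun]

theorem exists_normal_form {A D N G : Submodule 𝕜 X} [FiniteDimensional 𝕜 G] (hDN : D ≤ N)
    (hAD : A ≤ D ⊔ G) (hDA : D ≤ A ⊔ G) (m : ℕ) :
    ∃ V U : Submodule 𝕜 X, FiniteDimensional 𝕜 V ∧ FiniteDimensional 𝕜 U ∧ V ≤ A ∧ U ≤ N ∧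
      Disjoint U A ∧ Disjoint V N ∧
      (FiniteDimensional 𝕜 (N ⧸ D.comap N.subtype) → A ⊔ U = N ⊔ V) ∧
      (¬ FiniteDimensional 𝕜 (N ⧸ D.comap N.subtype) →
        A ⊔ U ≤ N ⊔ V ∧ Module.finrank 𝕜 U = Module.finrank 𝕜 V + m) := by
  obtain ⟨V, hVA, hV, hVN, hAV⟩ :=
    exists_finiteDimensional_le_disjoint_le_sup (hAD.trans (sup_le_sup_right hDN G))
  by_cases hQ : FiniteDimensional 𝕜 (N ⧸ D.comap N.subtype)
  · obtain ⟨G', hG', hNG'⟩ := finiteDimensional_quotient_comap_subtype_iff.mp hQ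
    have hNA : N ≤ A ⊔ (G ⊔ G') := by
      rw [← sup_assoc]
      exact hNG'.trans (sup_le_sup_right hDA G')
    obtain ⟨U, hUN, hU, hUA, hNU⟩ := exists_finiteDimensional_le_disjoint_le_sup hNA
    refine ⟨V, U, hV, hU, hVA, hUN, hUA, hVN, fun _ => ?_, fun h => absurd hQ h⟩
    exact le_antisymm (sup_le hAV (hUN.trans le_sup_left)) (sup_le hNU (hVA.trans le_sup_left))
  · have hQA : ¬ FiniteDimensional 𝕜 (N ⧸ A.comap N.subtype) := by
      rw [finiteDimensional_quotient_comap_subtype_iff]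
      rintro ⟨G', hG', hNG'⟩
      refine hQ (finiteDimensional_quotient_comap_subtype_iff.mpr ⟨G ⊔ G', inferInstance, ?_⟩)
      rw [← sup_assoc]
      exact hNG'.trans (sup_le_sup_right hAD G')
    obtain ⟨U, hUN, hU, hUA, hUk⟩ := exists_le_disjoint_finrank_eq hQA (Module.finrank 𝕜 V + m)
    exact ⟨V, U, hV, hU, hVA, hUN, hUA, hVN, fun h => absurd h hQ,
      fun _ => ⟨sup_le hAV (hUN.trans le_sup_left), hUk⟩⟩

end Submodule

namespace IsCompactOperator

variable {𝕜 X : Type*} [RCLike 𝕜] [NormedAddCommGroup X] [NormedSpace 𝕜 X] {K : X →L[𝕜] X}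

theorem finiteDimensional_ker_one_add (hK : IsCompactOperator K) :
    FiniteDimensional 𝕜 (LinearMap.ker ((1 + K : X →L[𝕜] X) : X →ₗ[𝕜] X)) := by
  set W := LinearMap.ker ((1 + K : X →L[𝕜] X) : X →ₗ[𝕜] X)
  have hKW (w : X) (hw : w ∈ W) : K w = -w := eq_neg_of_add_eq_zero_right hw
  have hmaps (w : X) (hw : w ∈ W) : (K : X →ₗ[𝕜] X) w ∈ W := by
    rw [ContinuousLinearMap.coe_coe, hKW w hw]
    exact W.neg_mem hw
  have hKres := (hK.restrict hmaps (ContinuousLinearMap.isClosed_ker _)).neg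
  have hid : -⇑((K : X →ₗ[𝕜] X).restrict hmaps) = id := by
    ext ⟨w, hw⟩
    simp [hKW w hw]
  exact FiniteDimensional.of_isCompactOperator_id (𝕜 := 𝕜) (hid ▸ hKres)

variable [CompleteSpace X]

theorem bijective_one_add_of_injective (hK : IsCompactOperator K)
    (hinj : Function.Injective (1 + K : X →L[𝕜] X)) :
    Function.Bijective (1 + K : X →L[𝕜] X) := by
  rcases hK.hasEigenvalue_or_mem_resolventSet (neg_ne_zero.mpr one_ne_zero : (-1 : 𝕜) ≠ 0)
    with hev | hres
  · obtain ⟨x, hx⟩ := hev.exists_hasEigenvector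
    have hKx : K x = -x := by simpa using hx.apply_eq_smul
    refine absurd (hinj (a₂ := 0) ?_) hx.2
    simp [hKx]
  · rw [spectrum.mem_resolventSet_iff, ← IsUnit.neg_iff,
      ContinuousLinearMap.isUnit_iff_bijective] at hres
    simpa [add_comm] using hres

theorem injective_one_add_of_surjective (hK : IsCompactOperator K)
    (hsurj : Function.Surjective (1 + K : X →L[𝕜] X)) :
    Function.Injective (1 + K : X →L[𝕜] X) := by
  set T := (1 + K : X →L[𝕜] X)
  set W := LinearMap.ker (T : X →ₗ[𝕜] X)
  have := hK.finiteDimensional_ker_one_add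
  obtain ⟨π, hπ⟩ := Submodule.ClosedComplemented.of_finiteDimensional W
  set P := LinearMap.ker (π : X →ₗ[𝕜] W)
  have : CompleteSpace P := π.isClosed_ker.completeSpace_coe
  have hπW (w : X) (hw : w ∈ W) : (π w : X) = w := congrArg Subtype.val (hπ ⟨w, hw⟩)
  have hker : LinearMap.ker ((T ∘L P.subtypeL : P →L[𝕜] X) : P →ₗ[𝕜] X) = ⊥ := by
    rw [LinearMap.ker_eq_bot']
    rintro ⟨x, hxP⟩ hx
    have hxP : π x = 0 := hxP
    have hx0 : x = 0 := by rw [← hπW x hx, hxP, ZeroMemClass.coe_zero]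
    simp [hx0]
  have hrange : LinearMap.range ((T ∘L P.subtypeL : P →L[𝕜] X) : P →ₗ[𝕜] X) = ⊤ := by
    rw [LinearMap.range_eq_top]
    intro y
    obtain ⟨z, rfl⟩ := hsurj y
    have hzP : z - π z ∈ P := by
      change π (z - π z) = 0
      rw [map_sub, hπ, sub_self]
    have hTπz : T (π z) = 0 := (π z).2
    exact ⟨⟨z - π z, hzP⟩, by simp [hTπz]⟩
  set e := ContinuousLinearEquiv.ofBijective (T ∘L P.subtypeL) hker hrange
  set S : X →L[𝕜] X := P.subtypeL ∘L (e.symm : X →L[𝕜] P)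
  have hTS (y : X) : T (S y) = y := e.apply_symm_apply y
  -- `T S = 1` makes `S = 1 - K S` an injective compact perturbation of the identity.
  have hS : S = 1 + -(K ∘L S) := by
    ext y
    exact eq_add_neg_of_add_eq (hTS y)
  have hSinj : Function.Injective (1 + -(K ∘L S) : X →L[𝕜] X) := by
    rw [← hS]
    exact fun a b hab => by simpa [hTS] using congrArg T hab
  have hSsurj : Function.Surjective S := by
    rw [hS]
    exact (bijective_one_add_of_injective (hK.comp_clm S).neg hSinj).2
  rw [injective_iff_map_eq_zero]
  intro w hw
  obtain ⟨y, rfl⟩ := hSsurj w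
  have hSyP : π (S y) = 0 := (e.symm y).2
  rw [← hπW _ hw, hSyP, ZeroMemClass.coe_zero]

theorem exists_bijective_one_add_finiteDimensional_range_sub (hK : IsCompactOperator K) :
    ∃ K₁ : X →L[𝕜] X, IsCompactOperator K₁ ∧ Function.Bijective (1 + K₁ : X →L[𝕜] X) ∧
      FiniteDimensional 𝕜 (LinearMap.range ((K₁ - K : X →L[𝕜] X) : X →ₗ[𝕜] X)) := by
  set T := (1 + K : X →L[𝕜] X)
  set W := LinearMap.ker (T : X →ₗ[𝕜] X)
  have := hK.finiteDimensional_ker_one_add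
  obtain ⟨π, hπ⟩ := Submodule.ClosedComplemented.of_finiteDimensional W
  have hTπ (x : X) : T (π x) = 0 := (π x).2
  obtain ⟨J, hTJ, hJ⟩ :=
    (LinearMap.range (T : X →ₗ[𝕜] X)).exists_linearMap_disjoint_range_and_injective_or_codisjoint W
  set F : X →L[𝕜] X := LinearMap.toContinuousLinearMap J ∘L π
  have hF : IsCompactOperator F := (isCompactOperator_of_locallyCompactSpace_rng _).comp_clm π
  have hTF (x : X) : (1 + (K + F)) x = T x + J (π x) := by
    simp [T, F, add_assoc]
  have hFJ : LinearMap.range (F : X →ₗ[𝕜] X) ≤ LinearMap.range J := by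
    rintro _ ⟨x, rfl⟩
    exact ⟨π x, rfl⟩
  refine ⟨K + F, hK.add hF, ?_, by
    rw [add_sub_cancel_left]; exact Submodule.finiteDimensional_of_le hFJ⟩
  rcases hJ with hJinj | hJT
  · refine bijective_one_add_of_injective (hK.add hF) ?_
    rw [injective_iff_map_eq_zero]
    intro x hx
    rw [hTF] at hx
    have hTx : T x = 0 := Submodule.disjoint_def'.mp hTJ _ ⟨x, rfl⟩ _ ⟨-π x, rfl⟩
      (by rw [map_neg]; exact eq_neg_of_add_eq_zero_left hx)
    have hπx : π x = 0 := hJinj (by rw [map_zero]; simpa [hTx] using hx)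
    simpa [hπx] using (congrArg Subtype.val (hπ ⟨x, hTx⟩)).symm
  · have hsurj : Function.Surjective (1 + (K + F) : X →L[𝕜] X) := by
      intro y
      obtain ⟨_, ⟨z, rfl⟩, _, ⟨w, rfl⟩, rfl⟩ :=
        Submodule.mem_sup.mp (codisjoint_iff.mp hJT ▸ Submodule.mem_top (x := y))
      refine ⟨z - π z + w, ?_⟩
      simp [hTF, hTπ, hπ]
    exact ⟨injective_one_add_of_surjective (hK.add hF) hsurj, hsurj⟩

end IsCompactOperator

theorem relDim_eq_bot_iff {X : Type*} [NormedAddCommGroup X] [NormedSpace ℂ X]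
    {M N : Submodule ℂ X} (h : SCPerturb M N) :
    relDim M N = ⊥ ↔ ¬ FiniteDimensional ℂ
      (N ⧸ (M.map ((1 + h.choose : X →L[ℂ] X) : X →ₗ[ℂ] X)).comap N.subtype) := by
  rw [relDim, dif_pos h, relIndexWith, edimE, edimE]
  split_ifs with hker hQ hQ
  · exact iff_of_false (EReal.coe_sub _ _ ▸ EReal.coe_ne_bot _) (not_not.mpr hQ)
  · exact iff_of_true (EReal.sub_top _) hQ
  · exact iff_of_false (by rw [EReal.top_sub_coe]; exact top_ne_bot) (not_not.mpr hQ)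
  · exact iff_of_true (EReal.sub_top _) hQ

theorem scPerturb_normal_form_general {X : Type*} [NormedAddCommGroup X]
    [NormedSpace ℂ X] [CompleteSpace X] (M N : Submodule ℂ X)
    (hMN : SCPerturb M N) (m : ℕ) :
    ∃ K₁ : X →L[ℂ] X, IsCompactOperator ⇑K₁ ∧
      Function.Bijective ⇑(1 + K₁ : X →L[ℂ] X) ∧
      ∃ V U : Submodule ℂ X,
        FiniteDimensional ℂ V ∧ FiniteDimensional ℂ U ∧
        V ≤ Submodule.map ((1 + K₁ : X →L[ℂ] X) : X →ₗ[ℂ] X) M ∧ U ≤ N ∧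
        U ⊓ Submodule.map ((1 + K₁ : X →L[ℂ] X) : X →ₗ[ℂ] X) M = ⊥ ∧ V ⊓ N = ⊥ ∧
        ((∃ n : ℤ, relDim M N = ((n : ℝ) : EReal)) →
          Submodule.map ((1 + K₁ : X →L[ℂ] X) : X →ₗ[ℂ] X) M ⊔ U = N ⊔ V) ∧
        (relDim M N = ⊥ →
          Submodule.map ((1 + K₁ : X →L[ℂ] X) : X →ₗ[ℂ] X) M ⊔ U ≤ N ⊔ V ∧
          Module.finrank ℂ U = Module.finrank ℂ V + m) := by
  obtain ⟨hK, hKN⟩ := hMN.choose_spec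
  set K := hMN.choose
  obtain ⟨K₁, hK₁, hbij, hG⟩ := hK.exists_bijective_one_add_finiteDimensional_range_sub
  have hsub : ((1 + K₁ : X →L[ℂ] X) : X →ₗ[ℂ] X) - ((1 + K : X →L[ℂ] X) : X →ₗ[ℂ] X) =
      ((K₁ - K : X →L[ℂ] X) : X →ₗ[ℂ] X) := by
    ext x
    simp
  have hAD := M.map_le_map_sup_range_sub ((1 + K₁ : X →L[ℂ] X) : X →ₗ[ℂ] X)
    ((1 + K : X →L[ℂ] X) : X →ₗ[ℂ] X)
  have hDA := M.map_le_map_sup_range_sub ((1 + K : X →L[ℂ] X) : X →ₗ[ℂ] X)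
    ((1 + K₁ : X →L[ℂ] X) : X →ₗ[ℂ] X)
  rw [hsub] at hAD
  rw [← neg_sub, LinearMap.range_neg, hsub] at hDA
  obtain ⟨V, U, hV, hU, hVA, hUN, hUA, hVN, hfin, hinf⟩ :=
    Submodule.exists_normal_form hKN hAD hDA m
  refine ⟨K₁, hK₁, hbij, V, U, hV, hU, hVA, hUN, disjoint_iff.mp hUA, disjoint_iff.mp hVN,
    ?_, fun hbot => hinf ((relDim_eq_bot_iff hMN).mp hbot)⟩
  rintro ⟨n, hn⟩
  refine hfin (not_not.mp fun hQ => ?_)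
  rw [(relDim_eq_bot_iff hMN).mpr hQ] at hn
  exact EReal.coe_ne_bot _ hn.symm

/-- Normal form for a right semi-compact perturbation: there
are a compact `K₁` with `I + K₁` invertible and finite dimensional subspaces
`V ≤ (I+K₁)M`, `U ≤ N` with `U ∩ (I+K₁)M = 0`, `V ∩ N = 0` such that
`(I+K₁)M ⊕ U = N ⊕ V` when `[M−N] ∈ ℤ`, while `(I+K₁)M ⊕ U ⊆ N ⊕ V` with
`dim U = dim V + m` when `[M−N] = −∞`. -/
theorem scPerturb_normal_form {X : Type*} [NormedAddCommGroup X]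
    [NormedSpace ℂ X] [CompleteSpace X] (M N : Submodule ℂ X)
    (hMc : IsClosed (M : Set X)) (hNc : IsClosed (N : Set X))
    (hMN : SCPerturb M N) (m : ℕ) (hm : 0 < m) :
    ∃ K₁ : X →L[ℂ] X, IsCompactOperator ⇑K₁ ∧
      Function.Bijective ⇑(1 + K₁ : X →L[ℂ] X) ∧
      ∃ V U : Submodule ℂ X,
        FiniteDimensional ℂ V ∧ FiniteDimensional ℂ U ∧
        V ≤ Submodule.map ((1 + K₁ : X →L[ℂ] X) : X →ₗ[ℂ] X) M ∧ U ≤ N ∧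
        U ⊓ Submodule.map ((1 + K₁ : X →L[ℂ] X) : X →ₗ[ℂ] X) M = ⊥ ∧ V ⊓ N = ⊥ ∧
        ((∃ n : ℤ, relDim M N = ((n : ℝ) : EReal)) →
          Submodule.map ((1 + K₁ : X →L[ℂ] X) : X →ₗ[ℂ] X) M ⊔ U = N ⊔ V) ∧
        (relDim M N = ⊥ →
          Submodule.map ((1 + K₁ : X →L[ℂ] X) : X →ₗ[ℂ] X) M ⊔ U ≤ N ⊔ V ∧
          Module.finrank ℂ U = Module.finrank ℂ V + m) :=
  scPerturb_normal_form_general M N hMN m
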